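/- There exist arbitrarily large harmonic group actions on graphs of genus 0 and of genus 1. Precisely: (a) every finite group Γ acts harmonically on some tree (for instance, the tree obtained by joining |Γ| copies of a fixed rooted tree with at least one edge at their roots, with Γ permuting the copies by the left-regular representation); and (b) for every n ≥ 3 the dihedral group D_n of order 2n acts harmonically on a graph of genus 1 (an n-cycle decorated with two copies of a fixed nonempty rooted tree at each vertex). -/

import Mathlib

open scoped Classical

/-- A finite connected multigraph without loop edges. -/
structure Multigraph where
  V : Type
  E : Type
  [fintypeV : Fintype V]
  [fintypeE : Fintype E]
  ends : E → Sym2 V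
  loopless : ∀ e : E, ¬ (ends e).IsDiag
  connected : (SimpleGraph.fromRel fun x y : V => ∃ e : E, ends e = s(x, y)).Connected

attribute [instance] Multigraph.fintypeV Multigraph.fintypeE

namespace Multigraph

/-- The genus (first Betti number, cyclomatic number) of a multigraph. -/
def genus (G : Multigraph) : ℤ :=
  (Fintype.card G.E : ℤ) - (Fintype.card G.V : ℤ) + 1

/-- A cycle in a multigraph, given as a nonempty set of edges such that every vertex is
incident to either 0 or 2 of its edges. -/
def IsCycleSet (G : Multigraph) (C : Set G.E) : Prop :=
  C.Nonempty ∧ ∀ x : G.V,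
    Nat.card {e : G.E // e ∈ C ∧ x ∈ G.ends e} = 0 ∨
    Nat.card {e : G.E // e ∈ C ∧ x ∈ G.ends e} = 2

end Multigraph

/-- A morphism of multigraphs: vertices go to vertices, and each edge goes either to an
edge joining the images of its endpoints, or to the common image of its endpoints
(in which case the edge is *vertical*). -/
structure Morphism (G G' : Multigraph) where
  vmap : G.V → G'.V
  emap : G.E → G'.E ⊕ G'.V
  compat : ∀ e : G.E,
    (∀ e', emap e = Sum.inl e' → G'.ends e' = (G.ends e).map vmap) ∧
    (∀ v, emap e = Sum.inr v → (G.ends e).map vmap = Sym2.diag v)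

namespace Morphism

/-- A morphism is harmonic if for every vertex `x`, the number of edges incident to `x`
mapping to a given edge `e'` incident to `φ(x)` is independent of the choice of `e'`. -/
def Harmonic {G G' : Multigraph} (φ : Morphism G G') : Prop :=
  ∀ (x : G.V) (e₁ e₂ : G'.E), φ.vmap x ∈ G'.ends e₁ → φ.vmap x ∈ G'.ends e₂ →
    Nat.card {e : G.E // x ∈ G.ends e ∧ φ.emap e = Sum.inl e₁} =
    Nat.card {e : G.E // x ∈ G.ends e ∧ φ.emap e = Sum.inl e₂}

/-- A morphism is nonconstant if its image is not a single vertex. -/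
def Nonconstant {G G' : Multigraph} (φ : Morphism G G') : Prop :=
  ∃ x y : G.V, φ.vmap x ≠ φ.vmap y

/-- Composition of morphisms of multigraphs. -/
def comp {G₁ G₂ G₃ : Multigraph} (ψ : Morphism G₂ G₃) (φ : Morphism G₁ G₂) :
    Morphism G₁ G₃ where
  vmap := ψ.vmap ∘ φ.vmap
  emap e := Sum.elim ψ.emap (fun v => Sum.inr (ψ.vmap v)) (φ.emap e)
  compat e := by
    constructor
    · intro e'' h
      rcases hφ : φ.emap e with e' | v
      · simp only [hφ, Sum.elim_inl] at h
        have h1 := (φ.compat e).1 e' hφ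
        have h2 := (ψ.compat e').1 e'' h
        rw [h2, h1, Sym2.map_map]
      · simp only [hφ, Sum.elim_inr] at h
        simp at h
    · intro v h
      rcases hφ : φ.emap e with e' | v₀
      · simp only [hφ, Sum.elim_inl] at h
        have h1 := (φ.compat e).1 e' hφ
        have h2 := (ψ.compat e').2 v h
        rw [← Sym2.map_map, ← h1]
        exact h2
      · simp only [hφ, Sum.elim_inr, Sum.inr.injEq] at h
        have h1 := (φ.compat e).2 v₀ hφ
        subst h
        rw [← Sym2.map_map, h1]
        rfl
end Morphism

/-- A group of automorphisms of a multigraph `G` (a faithful action of `Γ` on `G` by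
automorphisms, i.e. a subgroup of `Aut(G)`). -/
structure GraphAction (Γ : Type) [Group Γ] (G : Multigraph) where
  actV : Γ →* Equiv.Perm G.V
  actE : Γ →* Equiv.Perm G.E
  ends_map : ∀ (γ : Γ) (e : G.E), G.ends (actE γ e) = (G.ends e).map (actV γ)
  faithful : ∀ γ : Γ, (∀ x : G.V, actV γ x = x) → (∀ e : G.E, actE γ e = e) → γ = 1

namespace GraphAction

variable {Γ : Type} [Group Γ] {G : Multigraph}

/-- Two vertices lie in the same `Δ`-orbit. -/
def vrel (A : GraphAction Γ G) (Δ : Subgroup Γ) (x y : G.V) : Prop :=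
  ∃ δ ∈ Δ, A.actV δ x = y

/-- Two edges lie in the same `Δ`-orbit. -/
def erel (A : GraphAction Γ G) (Δ : Subgroup Γ) (e f : G.E) : Prop :=
  ∃ δ ∈ Δ, A.actE δ e = f

/-- The setoid of `Δ`-orbits of vertices. -/
def vSetoid (A : GraphAction Γ G) (Δ : Subgroup Γ) : Setoid G.V where
  r := A.vrel Δ
  iseqv := by
    constructor
    · intro x; exact ⟨1, Δ.one_mem, by simp⟩
    · rintro x y ⟨δ, hδ, h⟩
      refine ⟨δ⁻¹, Δ.inv_mem hδ, ?_⟩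
      rw [map_inv, ← h]
      exact Equiv.symm_apply_apply (A.actV δ) x
    · rintro x y z ⟨δ₁, h1, e1⟩ ⟨δ₂, h2, e2⟩
      refine ⟨δ₂ * δ₁, Δ.mul_mem h2 h1, ?_⟩
      rw [map_mul]
      simp [Equiv.Perm.mul_apply, e1, e2]

/-- The setoid of `Δ`-orbits of edges. -/
def eSetoid (A : GraphAction Γ G) (Δ : Subgroup Γ) : Setoid G.E where
  r := A.erel Δ
  iseqv := by
    constructor
    · intro e; exact ⟨1, Δ.one_mem, by simp⟩
    · rintro e f ⟨δ, hδ, h⟩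
      refine ⟨δ⁻¹, Δ.inv_mem hδ, ?_⟩
      rw [map_inv, ← h]
      exact Equiv.symm_apply_apply (A.actE δ) e
    · rintro e f k ⟨δ₁, h1, e1⟩ ⟨δ₂, h2, e2⟩
      refine ⟨δ₂ * δ₁, Δ.mul_mem h2 h1, ?_⟩
      rw [map_mul]
      simp [Equiv.Perm.mul_apply, e1, e2]

/-- An edge is `Δ`-vertical if its two endpoints lie in the same `Δ`-orbit (so it is
contracted by the quotient morphism `G → G/Δ`). -/
def Vertical (A : GraphAction Γ G) (Δ : Subgroup Γ) (e : G.E) : Prop :=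
  ∃ x y : G.V, G.ends e = s(x, y) ∧ A.vrel Δ x y

/-- The vertex set of the quotient graph `G/Δ`: the `Δ`-orbits of vertices. -/
abbrev quotV (A : GraphAction Γ G) (Δ : Subgroup Γ) : Type :=
  Quotient (A.vSetoid Δ)

/-- The edge set of the quotient graph `G/Δ`: the `Δ`-orbits of non-vertical edges. -/
abbrev quotE (A : GraphAction Γ G) (Δ : Subgroup Γ) : Type :=
  Quotient ((A.eSetoid Δ).comap (Subtype.val : {e : G.E // ¬ A.Vertical Δ e} → G.E))

/-- The genus of the quotient graph `G/Δ`. -/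
noncomputable def quotGenus (A : GraphAction Γ G) (Δ : Subgroup Γ) : ℤ :=
  (Nat.card (A.quotE Δ) : ℤ) - (Nat.card (A.quotV Δ) : ℤ) + 1

/-- The order of the stabilizer `Δ_x` of a vertex `x`. -/
noncomputable def stabOrder (A : GraphAction Γ G) (Δ : Subgroup Γ) (x : G.V) : ℕ :=
  Nat.card {γ : Γ // γ ∈ Δ ∧ A.actV γ x = x}

/-- The vertical multiplicity of a vertex `x`: the number of `Δ`-vertical edges
incident to `x`. -/
noncomputable def vertMult (A : GraphAction Γ G) (Δ : Subgroup Γ) (x : G.V) : ℕ :=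
  Nat.card {e : G.E // x ∈ G.ends e ∧ A.Vertical Δ e}

/-- `r_y = |Δ_x|` for a vertex `y` of the quotient `G/Δ` and any `x` in the fiber over `y`. -/
noncomputable def r (A : GraphAction Γ G) (Δ : Subgroup Γ) (y : A.quotV Δ) : ℕ :=
  A.stabOrder Δ (Quotient.out y)

/-- `w_y = v(x)/|Δ_x|` for a vertex `y` of the quotient `G/Δ` and any `x` in the fiber. -/
noncomputable def w (A : GraphAction Γ G) (Δ : Subgroup Γ) (y : A.quotV Δ) : ℕ :=
  A.vertMult Δ (Quotient.out y) / A.r Δ y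

/-- The ramification number `R = Σ_y [2(1 - 1/r_y) + w_y]` of the quotient map `G → G/Δ`. -/
noncomputable def ram (A : GraphAction Γ G) (Δ : Subgroup Γ) : ℚ :=
  ∑ᶠ y : A.quotV Δ, (2 * (1 - 1 / (A.r Δ y : ℚ)) + (A.w Δ y : ℚ))

/-- A vertex `y` of the quotient `G/Δ` is a branch point if `2(1 - 1/r_y) + w_y > 0`. -/
def IsBranch (A : GraphAction Γ G) (Δ : Subgroup Γ) (y : A.quotV Δ) : Prop :=
  0 < 2 * (1 - 1 / (A.r Δ y : ℚ)) + (A.w Δ y : ℚ)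

/-- The quotient morphism `φ_Δ : G → G/Δ` is harmonic: for every vertex `x` of `G` and
every pair of quotient edges incident to the image of `x`, the numbers of preimages
incident to `x` agree. -/
def QuotHarmonic (A : GraphAction Γ G) (Δ : Subgroup Γ) : Prop :=
  ∀ (x : G.V) (e₁ e₂ : G.E), ¬ A.Vertical Δ e₁ → ¬ A.Vertical Δ e₂ →
    (∃ v ∈ G.ends e₁, A.vrel Δ x v) → (∃ v ∈ G.ends e₂, A.vrel Δ x v) →
    Nat.card {e : G.E // x ∈ G.ends e ∧ A.erel Δ e e₁} =
    Nat.card {e : G.E // x ∈ G.ends e ∧ A.erel Δ e e₂}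

/-- The quotient morphism `φ_Δ : G → G/Δ` is non-degenerate: no neighborhood `x(1)` is
contracted to a vertex, i.e. every vertex has a neighbor outside its `Δ`-orbit. -/
def QuotNondeg (A : GraphAction Γ G) (Δ : Subgroup Γ) : Prop :=
  ∀ x : G.V, ∃ e : G.E, x ∈ G.ends e ∧ ∃ y ∈ G.ends e, ¬ A.vrel Δ x y

/-- `Γ` acts harmonically on `G` if for every subgroup `Δ ≤ Γ` the quotient morphism
`φ_Δ : G → G/Δ` is harmonic and non-degenerate. -/
def ActsHarmonically (A : GraphAction Γ G) : Prop :=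
  ∀ Δ : Subgroup Γ, A.QuotHarmonic Δ ∧ A.QuotNondeg Δ

/-- The quotient map `G → G/Δ` is horizontally unramified: all vertex stabilizers in `Δ`
are trivial. -/
def HorizUnramified (A : GraphAction Γ G) (Δ : Subgroup Γ) : Prop :=
  ∀ (x : G.V) (γ : Γ), γ ∈ Δ → A.actV γ x = x → γ = 1

end GraphAction

/-- `M g` is the maximal order of a group acting harmonically on a graph of genus `g`. -/
noncomputable def M (g : ℕ) : ℕ :=
  sSup {n : ℕ | ∃ (Γ : Type) (i : Group Γ) (G : Multigraph) (A : @GraphAction Γ i G),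
    @GraphAction.ActsHarmonically Γ i G A ∧ G.genus = (g : ℤ) ∧ Nat.card Γ = n}

/-!
If no element of `Δ` other than the identity fixes a vertex together with an edge at it, then
at every vertex `x` the preimages of a horizontal edge of `G/Δ` form one free `Δ_x`-orbit, so
they all number `|Δ_x|` and `φ_Δ` is harmonic; `φ_Δ` is non-degenerate as soon as every vertex
has a neighbour outside its `Γ`-orbit. Both conditions are immediate for the left-regular action
of `Γ` on the star with `|Γ|` leaves, and for `D_n` acting on the `n`-cycle with two leaves at
each vertex: a reflection fixing a vertex of the cycle swaps its two leaves, and one fixing a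
rim edge swaps the endpoints of that edge.
-/

namespace GraphAction

variable {Γ : Type} [Group Γ] {G : Multigraph} {A : GraphAction Γ G} {Δ Δ' : Subgroup Γ}

def FreeOnFlags (A : GraphAction Γ G) (Δ : Subgroup Γ) : Prop :=
  ∀ γ ∈ Δ, ∀ (x : G.V) (e : G.E), x ∈ G.ends e → A.actV γ x = x → A.actE γ e = e → γ = 1

lemma FreeOnFlags.mono (hΔ : Δ ≤ Δ') (h : A.FreeOnFlags Δ') : A.FreeOnFlags Δ :=
  fun γ hγ => h γ (hΔ hγ)

lemma QuotNondeg.mono (hΔ : Δ ≤ Δ') (h : A.QuotNondeg Δ') : A.QuotNondeg Δ := by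
  intro x
  obtain ⟨e, hxe, y, hye, hxy⟩ := h x
  exact ⟨e, hxe, y, hye, fun ⟨δ, hδ, hδx⟩ => hxy ⟨δ, hΔ hδ, hδx⟩⟩

lemma mem_ends_actE {γ : Γ} {x : G.V} {e : G.E} (h : x ∈ G.ends e) :
    A.actV γ x ∈ G.ends (A.actE γ e) := by
  rw [A.ends_map, Sym2.mem_map]
  exact ⟨x, h, rfl⟩

lemma erel_actE {γ : Γ} (hγ : γ ∈ Δ) (e : G.E) : A.erel Δ e (A.actE γ e) := ⟨γ, hγ, rfl⟩

lemma erel_trans {e f k : G.E} (h₁ : A.erel Δ e f) (h₂ : A.erel Δ f k) : A.erel Δ e k :=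
  (A.eSetoid Δ).iseqv.trans h₁ h₂

lemma erel_symm {e f : G.E} (h : A.erel Δ e f) : A.erel Δ f e :=
  (A.eSetoid Δ).iseqv.symm h

lemma Vertical.of_erel {e f : G.E} (hv : A.Vertical Δ e) (h : A.erel Δ e f) :
    A.Vertical Δ f := by
  obtain ⟨τ, hτ, rfl⟩ := h
  obtain ⟨x, y, hxy, δ, hδ, rfl⟩ := hv
  refine ⟨A.actV τ x, A.actV τ (A.actV δ x), ?_, τ * δ * τ⁻¹,
    Δ.mul_mem (Δ.mul_mem hτ hδ) (Δ.inv_mem hτ), ?_⟩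
  · rw [A.ends_map, hxy, Sym2.map_mk]
  · simp

lemma eq_of_mem_ends_of_not_vertical {e : G.E} {x y : G.V} (he : ¬ A.Vertical Δ e)
    (hx : x ∈ G.ends e) (hy : y ∈ G.ends e) (hxy : A.vrel Δ x y) : x = y := by
  by_contra hne
  exact he ⟨x, y, (Sym2.mem_and_mem_iff hne).mp ⟨hx, hy⟩, hxy⟩

lemma exists_mem_ends_erel {x : G.V} {e' : G.E} (h : ∃ v ∈ G.ends e', A.vrel Δ x v) :
    ∃ e₀, x ∈ G.ends e₀ ∧ A.erel Δ e₀ e' := by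
  obtain ⟨v, hv, δ, hδ, rfl⟩ := h
  refine ⟨A.actE δ⁻¹ e', ?_, erel_symm (erel_actE (Δ.inv_mem hδ) e')⟩
  simpa using mem_ends_actE (A := A) (γ := δ⁻¹) hv

/-- The preimages at `x` of a horizontal edge of `G/Δ` are the `Δ_x`-translates of any one of
them, and flag-freeness makes this orbit free. -/
lemma card_fiber_eq_stabOrder (hfree : A.FreeOnFlags Δ) {x : G.V} {e₀ e' : G.E}
    (hx : x ∈ G.ends e₀) (h₀ : A.erel Δ e₀ e') (hnv : ¬ A.Vertical Δ e') :
    Nat.card {e : G.E // x ∈ G.ends e ∧ A.erel Δ e e'} = A.stabOrder Δ x := by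
  let f : {γ : Γ // γ ∈ Δ ∧ A.actV γ x = x} → {e : G.E // x ∈ G.ends e ∧ A.erel Δ e e'} :=
    fun γ => ⟨A.actE γ e₀, by simpa [γ.2.2] using mem_ends_actE (A := A) (γ := γ.1) hx,
      erel_trans (erel_symm (erel_actE γ.2.1 e₀)) h₀⟩
  have hinj : f.Injective := by
    rintro ⟨γ₁, hγ₁, hx₁⟩ ⟨γ₂, hγ₂, hx₂⟩ h
    have h' : A.actE γ₁ e₀ = A.actE γ₂ e₀ := congrArg Subtype.val h
    have : γ₂⁻¹ * γ₁ = 1 := hfree _ (Δ.mul_mem (Δ.inv_mem hγ₂) hγ₁) x e₀ hx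
      (by rw [map_mul, Equiv.Perm.mul_apply, hx₁, map_inv, Equiv.Perm.inv_eq_iff_eq, hx₂])
      (by rw [map_mul, Equiv.Perm.mul_apply, h', map_inv, Equiv.Perm.inv_eq_iff_eq])
    simpa [inv_mul_eq_one, eq_comm] using this
  have hsurj : f.Surjective := by
    rintro ⟨e, hxe, he⟩
    obtain ⟨σ, hσ, rfl⟩ := erel_trans h₀ (erel_symm he)
    have hσx : A.actV σ x = x :=
      (eq_of_mem_ends_of_not_vertical (fun hv => hnv (hv.of_erel he)) hxe
        (mem_ends_actE hx) ⟨σ, hσ, rfl⟩).symm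
    exact ⟨⟨σ, hσ, hσx⟩, rfl⟩
  exact (Nat.card_congr (Equiv.ofBijective f ⟨hinj, hsurj⟩)).symm

theorem quotHarmonic_of_freeOnFlags (hfree : A.FreeOnFlags Δ) : A.QuotHarmonic Δ := by
  intro x e₁ e₂ hnv₁ hnv₂ hx₁ hx₂
  obtain ⟨f₁, hf₁, h₁⟩ := exists_mem_ends_erel hx₁
  obtain ⟨f₂, hf₂, h₂⟩ := exists_mem_ends_erel hx₂
  rw [card_fiber_eq_stabOrder hfree hf₁ h₁ hnv₁, card_fiber_eq_stabOrder hfree hf₂ h₂ hnv₂]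

theorem actsHarmonically_of_freeOnFlags (hfree : A.FreeOnFlags ⊤) (hnd : A.QuotNondeg ⊤) :
    A.ActsHarmonically :=
  fun _ => ⟨quotHarmonic_of_freeOnFlags (hfree.mono le_top), hnd.mono le_top⟩

lemma quotNondeg_of_invariant {α : Type*} (f : G.V → α) (hf : ∀ γ x, f (A.actV γ x) = f x)
    (hnbr : ∀ x, ∃ e, x ∈ G.ends e ∧ ∃ y ∈ G.ends e, f y ≠ f x) : A.QuotNondeg Δ := by
  intro x
  obtain ⟨e, hxe, y, hye, hfy⟩ := hnbr x
  exact ⟨e, hxe, y, hye, fun ⟨δ, _, hδ⟩ => hfy (hδ ▸ hf δ x)⟩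

def ofMulAction (G : Multigraph) [MulAction Γ G.V] [MulAction Γ G.E]
    (ends_smul : ∀ (γ : Γ) (e : G.E), G.ends (γ • e) = (G.ends e).map (γ • ·))
    (faithful : ∀ γ : Γ, (∀ x : G.V, γ • x = x) → γ = 1) : GraphAction Γ G where
  actV := MulAction.toPermHom Γ G.V
  actE := MulAction.toPermHom Γ G.E
  ends_map := ends_smul
  faithful γ h _ := faithful γ h

end GraphAction

lemma SimpleGraph.reachable_fromRel_of_ends {V E : Type*} {ends : E → Sym2 V} {x y : V}
    (e : E) (he : ends e = s(x, y)) :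
    (SimpleGraph.fromRel fun x y : V => ∃ e : E, ends e = s(x, y)).Reachable x y := by
  by_cases hxy : x = y
  · exact hxy ▸ .rfl
  · exact SimpleGraph.Adj.reachable ⟨hxy, Or.inl ⟨e, he⟩⟩

section StarTree

variable (Γ : Type) [Fintype Γ]

def starTree : Multigraph where
  V := Option Γ
  E := Γ
  ends γ := s(none, some γ)
  loopless := by simp
  connected := (SimpleGraph.connected_iff_exists_forall_reachable _).2 ⟨none, fun
    | none => .rfl
    | some γ =>
      SimpleGraph.reachable_fromRel_of_ends (ends := fun γ : Γ => s(none, some γ)) γ rfl⟩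

theorem starTree_genus : (starTree Γ).genus = 0 := by
  change (Fintype.card Γ : ℤ) - Fintype.card (Option Γ) + 1 = 0
  rw [Fintype.card_option]
  push_cast
  ring

variable [Group Γ]

instance : MulAction Γ (starTree Γ).V := inferInstanceAs (MulAction Γ (Option Γ))

instance : MulAction Γ (starTree Γ).E := inferInstanceAs (MulAction Γ Γ)

def starAction : GraphAction Γ (starTree Γ) :=
  GraphAction.ofMulAction (starTree Γ)
    (fun γ (e : Γ) => by
      change s(none, some (γ * e)) = (s(none, some e) : Sym2 (Option Γ)).map (γ • ·)
      simp)
    (fun γ h => by simpa using show some (γ * 1) = some 1 from h (some 1))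

theorem starAction_actsHarmonically : (starAction Γ).ActsHarmonically := by
  refine GraphAction.actsHarmonically_of_freeOnFlags
    (fun γ _ _ (e : Γ) _ _ he => mul_eq_right.mp he) ?_
  refine GraphAction.quotNondeg_of_invariant (Option.isSome : Option Γ → Bool)
    (fun γ x => by cases x <;> rfl) ?_
  rintro (_ | γ)
  · exact ⟨(1 : Γ), Sym2.mem_mk_left _ _, some 1, Sym2.mem_mk_right _ _, by simp⟩
  · exact ⟨γ, Sym2.mem_mk_right _ _, none, Sym2.mem_mk_left _ _, by simp⟩

end StarTree

namespace DecoratedCycle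

open DihedralGroup

variable {n : ℕ}

/-- The hubs `inl i` form an `n`-cycle through the rim edges `inl i` from hub `i` to hub
`i + 1`; the spoke `inr (i, ε)` joins hub `i` to the leaf `inr (i, ε)`. -/
def ends : ZMod n ⊕ ZMod n × Bool → Sym2 (ZMod n ⊕ ZMod n × Bool)
  | .inl i => s(.inl i, .inl (i + 1))
  | .inr l => s(.inl l.1, .inr l)

def smulVertex : DihedralGroup n → ZMod n ⊕ ZMod n × Bool → ZMod n ⊕ ZMod n × Bool
  | r k, .inl i => .inl (i + k)
  | r k, .inr (i, ε) => .inr (i + k, ε)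
  | sr k, .inl i => .inl (-i - k)
  | sr k, .inr (i, ε) => .inr (-i - k, !ε)

/-- `sr k` sends the rim edge from hub `i` to hub `i + 1` to the one from `-i - 1 - k` to
`-i - k`. -/
def smulEdge : DihedralGroup n → ZMod n ⊕ ZMod n × Bool → ZMod n ⊕ ZMod n × Bool
  | r k, .inl i => .inl (i + k)
  | r k, .inr (i, ε) => .inr (i + k, ε)
  | sr k, .inl i => .inl (-i - 1 - k)
  | sr k, .inr (i, ε) => .inr (-i - k, !ε)

lemma smulVertex_one (x : ZMod n ⊕ ZMod n × Bool) : smulVertex 1 x = x := by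
  rcases x with i | ⟨i, ε⟩ <;> simp only [one_def, smulVertex, add_zero]

lemma smulEdge_one (e : ZMod n ⊕ ZMod n × Bool) : smulEdge 1 e = e := by
  rcases e with i | ⟨i, ε⟩ <;> simp only [one_def, smulEdge, add_zero]

lemma smulVertex_mul (g h : DihedralGroup n) (x : ZMod n ⊕ ZMod n × Bool) :
    smulVertex (g * h) x = smulVertex g (smulVertex h x) := by
  rcases g with k | k <;> rcases h with l | l <;> rcases x with i | ⟨i, ε⟩ <;>
    simp only [r_mul_r, r_mul_sr, sr_mul_r, sr_mul_sr, smulVertex, Sum.inl.injEq,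
      Sum.inr.injEq, Bool.not_not, Prod.mk.injEq, and_true] <;> ring

lemma smulEdge_mul (g h : DihedralGroup n) (e : ZMod n ⊕ ZMod n × Bool) :
    smulEdge (g * h) e = smulEdge g (smulEdge h e) := by
  rcases g with k | k <;> rcases h with l | l <;> rcases e with i | ⟨i, ε⟩ <;>
    simp only [r_mul_r, r_mul_sr, sr_mul_r, sr_mul_sr, smulEdge, Sum.inl.injEq,
      Sum.inr.injEq, Bool.not_not, Prod.mk.injEq, and_true] <;> ring

lemma isLeft_smulVertex (g : DihedralGroup n) (x : ZMod n ⊕ ZMod n × Bool) :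
    (smulVertex g x).isLeft = x.isLeft := by
  rcases g with k | k <;> rcases x with i | ⟨i, ε⟩ <;> rfl

lemma connected_ends [NeZero n] :
    (SimpleGraph.fromRel fun x y => ∃ e, ends (n := n) e = s(x, y)).Connected := by
  have hub (k : ℕ) : (SimpleGraph.fromRel fun x y => ∃ e, ends (n := n) e = s(x, y)).Reachable
      (.inl 0) (.inl k) := by
    induction k with
    | zero => simp
    | succ k ih =>
      exact ih.trans (SimpleGraph.reachable_fromRel_of_ends (.inl k) (by simp [ends]))
  refine (SimpleGraph.connected_iff_exists_forall_reachable _).2 ⟨.inl 0, ?_⟩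
  rintro (i | l)
  · simpa using hub i.val
  · have hl := hub l.1.val
    rw [ZMod.natCast_zmod_val] at hl
    exact hl.trans (SimpleGraph.reachable_fromRel_of_ends (.inr l) rfl)

lemma ends_smulEdge (g : DihedralGroup n) (e : ZMod n ⊕ ZMod n × Bool) :
    ends (smulEdge g e) = (ends e).map (smulVertex g) := by
  rcases g with k | k <;> rcases e with i | ⟨i, ε⟩ <;>
    simp only [smulEdge, smulVertex, ends, Sym2.map_mk]
  · rw [add_right_comm]
  · rw [Sym2.eq_swap]
    congr 2 <;> ring

lemma eq_one_of_forall_smulVertex_eq (g : DihedralGroup n)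
    (h : ∀ x, smulVertex g x = x) : g = 1 := by
  rcases g with k | k
  · have hk := h (.inl 0)
    simp only [smulVertex, zero_add, Sum.inl.injEq] at hk
    rw [hk, r_zero]
  · simpa [smulVertex] using h (.inr (0, false))

lemma eq_one_of_fixes_flag [Fact (1 < n)] {g : DihedralGroup n}
    {x e : ZMod n ⊕ ZMod n × Bool} (hxe : x ∈ ends e) (hx : smulVertex g x = x)
    (he : smulEdge g e = e) : g = 1 := by
  rcases g with k | k
  · rcases x with i | ⟨i, ε⟩ <;>
      simp only [smulVertex, Sum.inl.injEq, Sum.inr.injEq, Prod.mk.injEq, add_eq_left,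
        and_true] at hx <;>
      rw [hx, r_zero]
  · rcases x with i | ⟨i, ε⟩ <;>
      simp only [smulVertex, Sum.inl.injEq, Sum.inr.injEq, Prod.mk.injEq,
        Bool.not_eq_eq_eq_not, Bool.eq_not_self, and_false] at hx
    rcases e with j | ⟨j, η⟩ <;>
      simp only [smulEdge, ends, Sum.inl.injEq, Sum.inr.injEq, Sym2.mem_iff, Prod.mk.injEq,
        Bool.not_eq_eq_eq_not, Bool.eq_not_self, and_false] at he hxe
    exfalso
    rcases hxe with rfl | rfl
    · exact one_ne_zero (by linear_combination hx - he : (1 : ZMod n) = 0)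
    · exact one_ne_zero (by linear_combination he - hx : (1 : ZMod n) = 0)

end DecoratedCycle

section DihedralAction

open DecoratedCycle

variable (n : ℕ) [NeZero n] [Fact (1 < n)]

def decoratedCycle : Multigraph where
  V := ZMod n ⊕ ZMod n × Bool
  E := ZMod n ⊕ ZMod n × Bool
  ends := ends
  loopless := by rintro (i | l) <;> simp [ends]
  connected := connected_ends

theorem decoratedCycle_genus : (decoratedCycle n).genus = 1 := by
  change (Fintype.card (decoratedCycle n).E : ℤ) - Fintype.card (decoratedCycle n).E + 1 = 1
  ring

instance : MulAction (DihedralGroup n) (decoratedCycle n).V where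
  smul := smulVertex
  one_smul := smulVertex_one
  mul_smul := smulVertex_mul

instance : MulAction (DihedralGroup n) (decoratedCycle n).E where
  smul := smulEdge
  one_smul := smulEdge_one
  mul_smul := smulEdge_mul

def dihedralAction : GraphAction (DihedralGroup n) (decoratedCycle n) :=
  GraphAction.ofMulAction (decoratedCycle n) ends_smulEdge eq_one_of_forall_smulVertex_eq

theorem dihedralAction_actsHarmonically : (dihedralAction n).ActsHarmonically := by
  refine GraphAction.actsHarmonically_of_freeOnFlags
    (fun _ _ _ _ hxe hx he => eq_one_of_fixes_flag hxe hx he) ?_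
  refine GraphAction.quotNondeg_of_invariant (Sum.isLeft : (decoratedCycle n).V → Bool)
    isLeft_smulVertex ?_
  rintro (i | l)
  · exact ⟨.inr (i, false), Sym2.mem_mk_left _ _, .inr (i, false), Sym2.mem_mk_right _ _,
      by simp⟩
  · exact ⟨.inr l, Sym2.mem_mk_right _ _, .inl l.1, Sym2.mem_mk_left _ _, by simp⟩

end DihedralAction

/-- There are arbitrarily large harmonic group actions in genus 0 and 1:
(a) every finite group acts harmonically on some tree; (b) for every `n ≥ 3` the dihedral
group of order `2n` acts harmonically on some graph of genus 1. -/
theorem large_actions_low_genus :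
    (∀ (Γ : Type) [Group Γ] [Finite Γ],
      ∃ (T : Multigraph) (A : GraphAction Γ T), A.ActsHarmonically ∧ T.genus = 0) ∧
    (∀ n : ℕ, 3 ≤ n →
      ∃ (G : Multigraph) (A : GraphAction (DihedralGroup n) G),
        A.ActsHarmonically ∧ G.genus = 1) := by
  refine ⟨fun Γ _ _ => ?_, fun n hn => ?_⟩
  · have := Fintype.ofFinite Γ
    exact ⟨starTree Γ, starAction Γ, starAction_actsHarmonically Γ, starTree_genus Γ⟩
  · have : NeZero n := ⟨by omega⟩
    have : Fact (1 < n) := ⟨by omega⟩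
    exact ⟨decoratedCycle n, dihedralAction n, dihedralAction_actsHarmonically n,
      decoratedCycle_genus n⟩
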